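/- arXiv:2010.06284 — 4 statements merged into one kernel-verified Lean document; each statement's English description precedes it below -/
import Mathlib

section
/- Maximum entropy principle for the generalized Gaussian: let X be a random vector in ℝ^m with density f supported on all of ℝ^m, and suppose E[‖X‖^s] < ∞ for some s > 0. Then the differential entropy H(f) = −∫ f log f satisfies H(f) ≤ (m/s)·log( c₁(m,s)·E[‖X‖^s] ), where c₁(m,s) = (π^{m/2} Γ(m/s+1)/Γ(m/2+1))^{s/m} · (s·e/m). -/
open Real MeasureTheory

lemma gg_integrable (m : ℕ) (s b : ℝ) (hs : 0 < s) (hb : 0 < b) :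
    Integrable (fun x : EuclideanSpace ℝ (Fin m) => Real.exp (-(b * ‖x‖ ^ s))) := by
  obtain ⟨n, hn⟩ : ∃ n : ℕ, (m : ℝ) < s * n := by
    obtain ⟨n, hn⟩ := exists_nat_gt ((m : ℝ) / s)
    exact ⟨n, by rwa [div_lt_iff₀ hs, mul_comm] at hn⟩
  set r : ℝ := s * n with hr
  have hr0 : 0 < r := lt_of_le_of_lt (Nat.cast_nonneg m) hn
  have hfinrank : (Module.finrank ℝ (EuclideanSpace ℝ (Fin m)) : ℝ) < r := by
    simpa [finrank_euclideanSpace] using hn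
  have hgint : Integrable (fun x : EuclideanSpace ℝ (Fin m) =>
      (2 : ℝ) ^ r * max 1 ((n.factorial : ℝ) / b ^ n) * (1 + ‖x‖) ^ (-r)) :=
    (integrable_one_add_norm hfinrank).const_mul _
  have hcont : Continuous (fun x : EuclideanSpace ℝ (Fin m) => Real.exp (-(b * ‖x‖ ^ s))) := by
    apply Real.continuous_exp.comp
    exact ((continuous_const.mul (continuous_norm.rpow_const (fun x => Or.inr hs.le))).neg)
  refine hgint.mono' hcont.aestronglyMeasurable (Filter.Eventually.of_forall fun x => ?_)
  set t := ‖x‖ with ht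
  have ht0 : 0 ≤ t := norm_nonneg x
  have h2r : (0:ℝ) < (2:ℝ) ^ r := Real.rpow_pos_of_pos two_pos r
  have hC1 : (1:ℝ) ≤ max 1 ((n.factorial : ℝ) / b ^ n) := le_max_left _ _
  rw [Real.norm_eq_abs, abs_of_pos (Real.exp_pos _)]
  rcases le_total t 1 with h1 | h1
  · have he : Real.exp (-(b * t ^ s)) ≤ 1 := by
      rw [Real.exp_le_one_iff, neg_nonpos]
      positivity
    have hbase : (0:ℝ) < 1 + t := by linarith
    have h2 : (2:ℝ) ^ (-r) ≤ (1 + t) ^ (-r) :=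
      Real.rpow_le_rpow_of_nonpos hbase (by linarith) (by linarith)
    calc Real.exp (-(b * t ^ s)) ≤ 1 := he
      _ = (2:ℝ) ^ r * 1 * (2:ℝ) ^ (-r) := by
          rw [mul_one, ← Real.rpow_add two_pos]; simp
      _ ≤ (2:ℝ) ^ r * max 1 ((n.factorial : ℝ) / b ^ n) * (1 + t) ^ (-r) := by
          apply mul_le_mul (by nlinarith [h2r]) h2 (Real.rpow_nonneg (by norm_num) _) (by positivity)
  · have ht1 : (0:ℝ) < t := lt_of_lt_of_le one_pos h1
    have hts : (0:ℝ) < t ^ s := Real.rpow_pos_of_pos ht1 s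
    -- exp(-(b t^s)) ≤ n!/b^n * t^(-r)
    have key : Real.exp (-(b * t ^ s)) ≤ (n.factorial : ℝ) / b ^ n * t ^ (-r) := by
      have h3 : (b * t ^ s) ^ n / (n.factorial:ℝ) ≤ Real.exp (b * t ^ s) :=
        Real.pow_div_factorial_le_exp (b * t ^ s) (by positivity) n
      have htr : ((t : ℝ) ^ s) ^ n = t ^ r := by
        rw [← Real.rpow_natCast (t ^ s) n, ← Real.rpow_mul ht0]
      have hfac : (0:ℝ) < (n.factorial : ℝ) := by positivity
      rw [div_le_iff₀ hfac, mul_pow, htr] at h3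
      have hCpos : (0:ℝ) < (n.factorial : ℝ) / b ^ n * t ^ (-r) :=
        mul_pos (by positivity) (Real.rpow_pos_of_pos ht1 _)
      have hinv : ((n.factorial : ℝ) / b ^ n * t ^ (-r))⁻¹ ≤ Real.exp (b * t ^ s) := by
        rw [Real.rpow_neg ht0, mul_inv, inv_inv, inv_div, div_mul_eq_mul_div,
          div_le_iff₀ hfac]
        exact h3
      have h5 := inv_anti₀ (by positivity) hinv
      rwa [inv_inv, ← Real.exp_neg] at h5
    have h4 : t ^ (-r) ≤ (2:ℝ) ^ r * (1 + t) ^ (-r) := by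
      have h6 : ((2:ℝ) * t) ^ (-r) ≤ (1 + t) ^ (-r) :=
        Real.rpow_le_rpow_of_nonpos (by linarith) (by linarith) (by linarith)
      have h7 : t ^ (-r) = (2:ℝ) ^ r * ((2:ℝ) * t) ^ (-r) := by
        rw [Real.mul_rpow (by norm_num) ht0, ← mul_assoc, ← Real.rpow_add two_pos]
        simp
      rw [h7]
      exact mul_le_mul_of_nonneg_left h6 (le_of_lt h2r)
    calc Real.exp (-(b * t ^ s)) ≤ (n.factorial : ℝ) / b ^ n * t ^ (-r) := key
      _ ≤ max 1 ((n.factorial : ℝ) / b ^ n) * ((2:ℝ) ^ r * (1 + t) ^ (-r)) := by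
          apply mul_le_mul (le_max_right _ _) h4 (Real.rpow_nonneg ht0 _) (by positivity)
      _ = (2:ℝ) ^ r * max 1 ((n.factorial : ℝ) / b ^ n) * (1 + t) ^ (-r) := by ring

lemma gg_integral_one (m : ℕ) (hm : 1 ≤ m) (s : ℝ) (hs : 0 < s) :
    ∫ x : EuclideanSpace ℝ (Fin m), Real.exp (-‖x‖ ^ s) =
      Real.pi ^ ((m : ℝ) / 2) * Real.Gamma (m / s + 1) / Real.Gamma (m / 2 + 1) := by
  have hG1 : 0 < Real.Gamma ((m : ℝ) / s + 1) :=
    Real.Gamma_pos_of_pos (by positivity)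
  have hG2 : 0 < Real.Gamma ((m : ℝ) / 2 + 1) :=
    Real.Gamma_pos_of_pos (by positivity)
  have hI : 0 ≤ ∫ x : EuclideanSpace ℝ (Fin m), Real.exp (-‖x‖ ^ s) :=
    integral_nonneg fun x => (Real.exp_pos _).le
  haveI : Nonempty (Fin m) := ⟨⟨0, hm⟩⟩
  have h1 := MeasureTheory.measure_unitBall_eq_integral_div_gamma
    (volume : Measure (EuclideanSpace ℝ (Fin m))) hs
  have h2 := EuclideanSpace.volume_ball (Fin m) (0 : EuclideanSpace ℝ (Fin m)) 1
  rw [h1] at h2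
  simp only [ENNReal.ofReal_one, one_pow, one_mul, Fintype.card_fin,
    finrank_euclideanSpace, Fintype.card_fin] at h2
  rw [ENNReal.ofReal_eq_ofReal_iff (by positivity) (by positivity)] at h2
  have hsqrt : Real.sqrt π ^ m = π ^ ((m : ℝ) / 2) := by
    rw [Real.sqrt_eq_rpow, ← Real.rpow_natCast (π ^ ((1:ℝ)/2)) m, ← Real.rpow_mul pi_pos.le]
    congr 1
    push_cast
    ring
  rw [hsqrt] at h2
  rw [div_eq_div_iff hG1.ne' hG2.ne'] at h2
  rw [eq_div_iff hG2.ne']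
  exact h2

lemma gg_integral (m : ℕ) (hm : 1 ≤ m) (s b : ℝ) (hs : 0 < s) (hb : 0 < b) :
    ∫ x : EuclideanSpace ℝ (Fin m), Real.exp (-(b * ‖x‖ ^ s)) =
      (Real.pi ^ ((m : ℝ) / 2) * Real.Gamma (m / s + 1) / Real.Gamma (m / 2 + 1)) *
        b ^ (-((m : ℝ) / s)) := by
  set c : ℝ := b ^ ((1:ℝ)/s) with hcdef
  have hc : 0 < c := Real.rpow_pos_of_pos hb _
  have hcs : c ^ s = b := by
    rw [hcdef, ← Real.rpow_mul hb.le, one_div_mul_cancel hs.ne', Real.rpow_one]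
  have key : ∀ x : EuclideanSpace ℝ (Fin m),
      Real.exp (-(b * ‖x‖ ^ s)) = Real.exp (-‖c • x‖ ^ s) := by
    intro x
    rw [norm_smul, Real.norm_eq_abs, abs_of_pos hc,
      Real.mul_rpow hc.le (norm_nonneg x), hcs]
  simp_rw [key]
  rw [show (fun x : EuclideanSpace ℝ (Fin m) => Real.exp (-‖c • x‖ ^ s)) =
      (fun x : EuclideanSpace ℝ (Fin m) =>
        (fun y : EuclideanSpace ℝ (Fin m) => Real.exp (-‖y‖ ^ s)) (c • x)) from rfl]
  rw [MeasureTheory.Measure.integral_comp_smul_of_nonneg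
    (volume : Measure (EuclideanSpace ℝ (Fin m)))
    (fun y : EuclideanSpace ℝ (Fin m) => Real.exp (-‖y‖ ^ s)) c (hR := hc.le)]
  rw [gg_integral_one m hm s hs, smul_eq_mul, finrank_euclideanSpace, Fintype.card_fin]
  have hcm : (c ^ m)⁻¹ = b ^ (-((m : ℝ) / s)) := by
    rw [hcdef, ← Real.rpow_natCast (b ^ ((1:ℝ)/s)) m, ← Real.rpow_mul hb.le,
      ← Real.rpow_neg hb.le]
    congr 1
    field_simp
  rw [hcm]; ring

theorem gg_max_entropy (m : ℕ) (hm : 1 ≤ m) (s : ℝ) (hs : 0 < s)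
    (f : EuclideanSpace ℝ (Fin m) → ℝ)
    (hf_meas : Measurable f) (hf_pos : ∀ x, 0 < f x)
    (hf_int : ∫ x, f x = 1)
    (hmom : Integrable (fun x : EuclideanSpace ℝ (Fin m) => ‖x‖ ^ s * f x))
    (hent : Integrable (fun x : EuclideanSpace ℝ (Fin m) => f x * Real.log (f x))) :
    (-∫ x, f x * Real.log (f x)) ≤
      (m / s) * Real.log
        (((Real.pi ^ ((m : ℝ) / 2) * Real.Gamma (m / s + 1) / Real.Gamma (m / 2 + 1)) ^ (s / (m : ℝ))
            * (s * Real.exp 1 / m)) *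
          ∫ x, ‖x‖ ^ s * f x) := by
  have hm0 : (0:ℝ) < m := by exact_mod_cast hm
  haveI : Nonempty (Fin m) := ⟨⟨0, hm⟩⟩
  set M : ℝ := ∫ x : EuclideanSpace ℝ (Fin m), ‖x‖ ^ s * f x with hMdef
  have hf_integrable : Integrable f := by
    by_contra h
    rw [integral_undef h] at hf_int; norm_num at hf_int
  have hM_pos : 0 < M := by
    rw [hMdef, integral_pos_iff_support_of_nonneg
      (fun x => by have := (hf_pos x).le; have := Real.rpow_nonneg (norm_nonneg x) s; positivity)
      hmom]
    have hsupp : ({(0 : EuclideanSpace ℝ (Fin m))}ᶜ : Set _) ⊆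
        Function.support fun x => ‖x‖ ^ s * f x := by
      intro x hx
      have hx0 : x ≠ 0 := hx
      have hnx : 0 < ‖x‖ := norm_pos_iff.mpr hx0
      have h1 : 0 < ‖x‖ ^ s := Real.rpow_pos_of_pos hnx s
      have h2 := hf_pos x
      simp only [Function.mem_support]
      positivity
    obtain ⟨y, hy⟩ := exists_ne (0 : EuclideanSpace ℝ (Fin m))
    exact lt_of_lt_of_le (isOpen_compl_singleton.measure_pos volume ⟨y, hy⟩)
      (measure_mono hsupp)
  set b : ℝ := m / (s * M) with hbdef
  have hb : 0 < b := by positivity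
  have hG1 : 0 < Real.Gamma ((m : ℝ) / s + 1) := Real.Gamma_pos_of_pos (by positivity)
  have hG2 : 0 < Real.Gamma ((m : ℝ) / 2 + 1) := Real.Gamma_pos_of_pos (by positivity)
  set K : ℝ := Real.pi ^ ((m : ℝ) / 2) * Real.Gamma (m / s + 1) / Real.Gamma (m / 2 + 1)
    with hKdef
  have hK : 0 < K := by
    rw [hKdef]
    have := Real.rpow_pos_of_pos Real.pi_pos ((m:ℝ)/2)
    positivity
  set Z : ℝ := K * b ^ (-((m : ℝ) / s)) with hZdef
  have hZ : 0 < Z := mul_pos hK (Real.rpow_pos_of_pos hb _)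
  have hZval : ∫ x : EuclideanSpace ℝ (Fin m), Real.exp (-(b * ‖x‖ ^ s)) = Z :=
    gg_integral m hm s b hs hb
  have hg_int : Integrable (fun x : EuclideanSpace ℝ (Fin m) =>
      Z⁻¹ * Real.exp (-(b * ‖x‖ ^ s))) := (gg_integrable m s b hs hb).const_mul _
  have hg_one : ∫ x : EuclideanSpace ℝ (Fin m), Z⁻¹ * Real.exp (-(b * ‖x‖ ^ s)) = 1 := by
    rw [MeasureTheory.integral_const_mul, hZval, inv_mul_cancel₀ hZ.ne']
  have hlog : ∀ x : EuclideanSpace ℝ (Fin m),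
      f x * Real.log (Z⁻¹ * Real.exp (-(b * ‖x‖ ^ s))) =
        Real.log Z⁻¹ * f x - b * (‖x‖ ^ s * f x) := by
    intro x
    rw [Real.log_mul (inv_ne_zero hZ.ne') (Real.exp_ne_zero _), Real.log_exp]
    ring
  have hflogg_int : Integrable (fun x : EuclideanSpace ℝ (Fin m) =>
      f x * Real.log (Z⁻¹ * Real.exp (-(b * ‖x‖ ^ s)))) := by
    simp_rw [hlog]
    exact (hf_integrable.const_mul _).sub (hmom.const_mul b)
  have hflogg_val : ∫ x : EuclideanSpace ℝ (Fin m),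
      f x * Real.log (Z⁻¹ * Real.exp (-(b * ‖x‖ ^ s))) = Real.log Z⁻¹ - b * M := by
    simp_rw [hlog]
    rw [integral_sub (hf_integrable.const_mul _) (hmom.const_mul b),
      MeasureTheory.integral_const_mul, MeasureTheory.integral_const_mul, hf_int, mul_one, ← hMdef]
  have gibbs : ∫ x : EuclideanSpace ℝ (Fin m),
      (f x * Real.log (Z⁻¹ * Real.exp (-(b * ‖x‖ ^ s))) - f x * Real.log (f x)) ≤
      ∫ x : EuclideanSpace ℝ (Fin m), (Z⁻¹ * Real.exp (-(b * ‖x‖ ^ s)) - f x) := by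
    apply integral_mono (hflogg_int.sub hent) (hg_int.sub hf_integrable)
    intro x
    have hgx : 0 < Z⁻¹ * Real.exp (-(b * ‖x‖ ^ s)) :=
      mul_pos (inv_pos.mpr hZ) (Real.exp_pos _)
    have hfx := hf_pos x
    have hlog2 := Real.log_le_sub_one_of_pos (div_pos hgx hfx)
    rw [Real.log_div hgx.ne' hfx.ne'] at hlog2
    have h3 := mul_le_mul_of_nonneg_left hlog2 hfx.le
    have h4 : f x * (Z⁻¹ * Real.exp (-(b * ‖x‖ ^ s)) / f x - 1) =
        Z⁻¹ * Real.exp (-(b * ‖x‖ ^ s)) - f x := by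
      field_simp
    simp only []
    calc f x * Real.log (Z⁻¹ * Real.exp (-(b * ‖x‖ ^ s))) - f x * Real.log (f x)
        = f x * (Real.log (Z⁻¹ * Real.exp (-(b * ‖x‖ ^ s))) - Real.log (f x)) := by ring
      _ ≤ f x * (Z⁻¹ * Real.exp (-(b * ‖x‖ ^ s)) / f x - 1) := h3
      _ = Z⁻¹ * Real.exp (-(b * ‖x‖ ^ s)) - f x := h4
  rw [integral_sub hflogg_int hent, integral_sub hg_int hf_integrable, hg_one, hf_int,
    hflogg_val, sub_self] at gibbs
  have hent_bound : (-∫ x, f x * Real.log (f x)) ≤ Real.log Z + b * M := by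
    rw [Real.log_inv] at gibbs
    linarith
  refine hent_bound.trans_eq ?_
  have hbM : b * M = (m : ℝ) / s := by
    rw [hbdef]; field_simp
  have hlogZ : Real.log Z = Real.log K - ((m : ℝ) / s) * Real.log b := by
    rw [hZdef, Real.log_mul hK.ne' (Real.rpow_pos_of_pos hb _).ne',
      Real.log_rpow hb]
    ring
  have hlogb : Real.log b = Real.log m - (Real.log s + Real.log M) := by
    rw [hbdef, Real.log_div hm0.ne' (by positivity), Real.log_mul hs.ne' hM_pos.ne']
  have hRHS : Real.log ((K ^ (s / (m : ℝ)) * (s * Real.exp 1 / m)) * M)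
      = (s / m) * Real.log K + (Real.log s + 1 - Real.log m) + Real.log M := by
    rw [Real.log_mul (by positivity) hM_pos.ne',
      Real.log_mul (by positivity) (by positivity),
      Real.log_rpow hK, Real.log_div (by positivity) hm0.ne',
      Real.log_mul hs.ne' (Real.exp_pos 1).ne', Real.log_exp]
  rw [hRHS, hbM, hlogZ, hlogb]
  field_simp
  ring
end

section
/- Equality case of the maximum entropy principle: if X has density f(x) = c(m,s)·exp(−τ‖x‖^s) with τ = m/(s·E[‖X‖^s]) and c(m,s) = Γ(m/2+1)τ^{m/s}/(Γ(m/s+1)π^{m/2}), then H(f) = (m/s)·log( c₁(m,s)·E[‖X‖^s] ), where c₁(m,s) = (π^{m/2}Γ(m/s+1)/Γ(m/2+1))^{s/m}·(s·e/m). -/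
/-!
The density is the Gibbs density `Z⁻¹ exp (-τ ‖x‖ ^ s)` whose normaliser is the partition function
`Z = ∫ exp (-τ ‖x‖ ^ s)`, so its entropy is `log Z + τ E[‖X‖ ^ s]`. Polar coordinates reduce
`∫ ‖x‖ ^ a exp (-τ ‖x‖ ^ s)` to a Gamma integral; with `a = 0` this gives
`Z = π^(m/2) Γ(m/s + 1) / (Γ(m/2 + 1) τ^(m/s))`, and with `a = s` it gives `E[‖X‖ ^ s] = m / (s τ)`.
The claimed formula is then an identity between logarithms.
-/

open Real MeasureTheory Module Metric

section Gibbs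

variable {α : Type*} [MeasurableSpace α] (μ : Measure α) (τ : ℝ) (φ : α → ℝ)

noncomputable def gibbsDensity (x : α) : ℝ := (∫ y, exp (-τ * φ y) ∂μ)⁻¹ * exp (-τ * φ x)

lemma neg_integral_gibbsDensity_mul_log [NeZero μ] (hexp : Integrable (fun x => exp (-τ * φ x)) μ)
    (hφexp : Integrable (fun x => φ x * exp (-τ * φ x)) μ) :
    -∫ x, gibbsDensity μ τ φ x * log (gibbsDensity μ τ φ x) ∂μ =
      log (∫ x, exp (-τ * φ x) ∂μ) + τ * ∫ x, φ x * gibbsDensity μ τ φ x ∂μ := by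
  simp only [gibbsDensity]
  set Z := ∫ x, exp (-τ * φ x) ∂μ
  have hZ : 0 < Z := integral_exp_pos hexp
  have hlog (x : α) : Z⁻¹ * exp (-τ * φ x) * log (Z⁻¹ * exp (-τ * φ x)) =
      -log Z * (Z⁻¹ * exp (-τ * φ x)) - τ * (Z⁻¹ * (φ x * exp (-τ * φ x))) := by
    rw [log_mul (inv_ne_zero hZ.ne') (exp_ne_zero _), log_exp, log_inv]
    ring
  simp_rw [hlog, mul_left_comm (φ _) Z⁻¹]
  rw [integral_sub ((hexp.const_mul _).const_mul _) ((hφexp.const_mul _).const_mul τ),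
    integral_const_mul, integral_const_mul, integral_const_mul, integral_const_mul,
    inv_mul_cancel₀ hZ.ne']
  ring

end Gibbs

section Radial

variable {E : Type*} [NormedAddCommGroup E] [NormedSpace ℝ E] [FiniteDimensional ℝ E]
  [Nontrivial E] {a s τ : ℝ}

lemma pow_finrank_sub_one_smul_rpow_mul {y : ℝ} (hy : 0 < y) (c : ℝ) :
    y ^ (finrank ℝ E - 1) • (y ^ a * c) = y ^ ((finrank ℝ E : ℝ) - 1 + a) * c := by
  rw [smul_eq_mul, ← mul_assoc, ← rpow_natCast, Nat.cast_sub finrank_pos, Nat.cast_one,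
    ← rpow_add hy]

variable [MeasurableSpace E] [BorelSpace E] (μ : Measure E) [μ.IsAddHaarMeasure]

lemma integrable_rpow_norm_mul_exp_neg_mul_rpow_norm (ha : -(finrank ℝ E : ℝ) < a) (hs : 0 < s)
    (hτ : 0 < τ) : Integrable (fun x => ‖x‖ ^ a * exp (-τ * ‖x‖ ^ s)) μ := by
  rw [integrable_fun_norm_addHaar μ (f := fun y => y ^ a * exp (-τ * y ^ s))]
  exact (integrableOn_rpow_mul_exp_neg_mul_rpow (by linarith) hs hτ).congr_fun
    (fun y hy => (pow_finrank_sub_one_smul_rpow_mul hy _).symm) measurableSet_Ioi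

lemma integrable_exp_neg_mul_rpow_norm (hs : 0 < s) (hτ : 0 < τ) :
    Integrable (fun x => exp (-τ * ‖x‖ ^ s)) μ := by
  simpa using integrable_rpow_norm_mul_exp_neg_mul_rpow_norm μ (a := 0)
    (neg_lt_zero.2 (Nat.cast_pos.2 finrank_pos)) hs hτ

lemma integral_rpow_norm_mul_exp_neg_mul_rpow_norm (ha : -(finrank ℝ E : ℝ) < a) (hs : 0 < s)
    (hτ : 0 < τ) :
    ∫ x, ‖x‖ ^ a * exp (-τ * ‖x‖ ^ s) ∂μ = finrank ℝ E * μ.real (ball 0 1) *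
      (τ ^ (-((finrank ℝ E : ℝ) + a) / s) * (1 / s) * Gamma (((finrank ℝ E : ℝ) + a) / s)) := by
  rw [integral_fun_norm_addHaar μ (fun y => y ^ a * exp (-τ * y ^ s)),
    setIntegral_congr_fun measurableSet_Ioi (fun y hy => pow_finrank_sub_one_smul_rpow_mul hy _),
    integral_rpow_mul_exp_neg_mul_rpow hs (by linarith) hτ, nsmul_eq_mul, smul_eq_mul,
    show (finrank ℝ E : ℝ) - 1 + a + 1 = finrank ℝ E + a by ring]
  ring

lemma integral_exp_neg_mul_rpow_norm (hs : 0 < s) (hτ : 0 < τ) :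
    ∫ x, exp (-τ * ‖x‖ ^ s) ∂μ =
      μ.real (ball 0 1) * Gamma (finrank ℝ E / s + 1) * τ ^ (-(finrank ℝ E / s)) := by
  have hn : (0 : ℝ) < finrank ℝ E := Nat.cast_pos.2 finrank_pos
  have h := integral_rpow_norm_mul_exp_neg_mul_rpow_norm μ (a := 0) (by linarith) hs hτ
  simp only [rpow_zero, one_mul, add_zero] at h
  rw [h, Gamma_add_one (div_pos hn hs).ne', neg_div]
  ring

lemma integral_rpow_norm_mul_exp_neg_mul_rpow_norm_self (hs : 0 < s) (hτ : 0 < τ) :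
    ∫ x, ‖x‖ ^ s * exp (-τ * ‖x‖ ^ s) ∂μ =
      finrank ℝ E / (s * τ) * ∫ x, exp (-τ * ‖x‖ ^ s) ∂μ := by
  have hn : (0 : ℝ) < finrank ℝ E := Nat.cast_pos.2 finrank_pos
  rw [integral_rpow_norm_mul_exp_neg_mul_rpow_norm μ (by linarith) hs hτ,
    integral_exp_neg_mul_rpow_norm μ hs hτ,
    show -((finrank ℝ E : ℝ) + s) / s = -(finrank ℝ E / s) + -1 by field_simp; ring,
    show ((finrank ℝ E : ℝ) + s) / s = finrank ℝ E / s + 1 by field_simp,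
    rpow_add hτ, rpow_neg_one, Gamma_add_one (div_pos hn hs).ne']
  field_simp

lemma integral_rpow_norm_mul_gibbsDensity (hs : 0 < s) (hτ : 0 < τ) :
    ∫ x, ‖x‖ ^ s * gibbsDensity μ τ (‖·‖ ^ s) x ∂μ = finrank ℝ E / (s * τ) := by
  have hZ := integral_exp_pos (integrable_exp_neg_mul_rpow_norm μ hs hτ)
  simp_rw [gibbsDensity, mul_left_comm (‖_‖ ^ s)]
  rw [integral_const_mul, integral_rpow_norm_mul_exp_neg_mul_rpow_norm_self μ hs hτ,
    mul_left_comm, inv_mul_cancel₀ hZ.ne', mul_one]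

lemma neg_integral_gibbsDensity_rpow_norm_mul_log (hs : 0 < s) (hτ : 0 < τ) :
    -∫ x, gibbsDensity μ τ (‖·‖ ^ s) x * log (gibbsDensity μ τ (‖·‖ ^ s) x) ∂μ =
      log (∫ x, exp (-τ * ‖x‖ ^ s) ∂μ) + finrank ℝ E / s := by
  rw [neg_integral_gibbsDensity_mul_log μ τ _ (integrable_exp_neg_mul_rpow_norm μ hs hτ)
    (integrable_rpow_norm_mul_exp_neg_mul_rpow_norm μ (by linarith) hs hτ),
    integral_rpow_norm_mul_gibbsDensity μ hs hτ]
  field_simp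

end Radial

lemma InnerProductSpace.volume_real_ball_zero_one {E : Type*} [NormedAddCommGroup E]
    [InnerProductSpace ℝ E] [FiniteDimensional ℝ E] [MeasurableSpace E] [BorelSpace E]
    [Nontrivial E] :
    volume.real (ball (0 : E) 1) = π ^ ((finrank ℝ E : ℝ) / 2) / Gamma (finrank ℝ E / 2 + 1) := by
  rw [measureReal_def, InnerProductSpace.volume_ball, ENNReal.ofReal_one, one_pow, one_mul,
    ENNReal.toReal_ofReal (by positivity), sqrt_eq_rpow, ← rpow_natCast, ← rpow_mul pi_pos.le,
    one_div_mul_eq_div]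

lemma InnerProductSpace.integral_exp_neg_mul_rpow_norm {E : Type*} [NormedAddCommGroup E]
    [InnerProductSpace ℝ E] [FiniteDimensional ℝ E] [MeasurableSpace E] [BorelSpace E]
    [Nontrivial E] {s τ : ℝ} (hs : 0 < s) (hτ : 0 < τ) :
    ∫ x : E, exp (-τ * ‖x‖ ^ s) = π ^ ((finrank ℝ E : ℝ) / 2) * Gamma (finrank ℝ E / s + 1) /
      Gamma (finrank ℝ E / 2 + 1) * τ ^ (-(finrank ℝ E / s)) := by
  rw [_root_.integral_exp_neg_mul_rpow_norm _ hs hτ, volume_real_ball_zero_one]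
  ring

lemma log_mul_rpow_neg_add_eq_mul_log {K τ r : ℝ} (hK : 0 < K) (hτ : 0 < τ) (hr : r ≠ 0) :
    log (K * τ ^ (-r)) + r = r * log (K ^ r⁻¹ * exp 1 / τ) := by
  rw [log_mul hK.ne' (rpow_pos_of_pos hτ _).ne', log_rpow hτ,
    log_div (by positivity) hτ.ne', log_mul (by positivity) (exp_ne_zero 1), log_rpow hK, log_exp]
  field_simp
  ring

theorem gg_max_entropy_equality_general (m : ℕ) (hm : 1 ≤ m) (s τ : ℝ) (hs : 0 < s) (hτ : 0 < τ)
    (f : EuclideanSpace ℝ (Fin m) → ℝ)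
    (hf : ∀ x, f x = (Real.Gamma (m / 2 + 1) * τ ^ ((m : ℝ) / s) /
        (Real.Gamma (m / s + 1) * Real.pi ^ ((m : ℝ) / 2))) * Real.exp (-τ * ‖x‖ ^ s)) :
    (-∫ x, f x * Real.log (f x)) =
      (m / s) * Real.log
        (((Real.pi ^ ((m : ℝ) / 2) * Real.Gamma (m / s + 1) / Real.Gamma (m / 2 + 1)) ^ (s / (m : ℝ))
            * (s * Real.exp 1 / m)) *
          ∫ x, ‖x‖ ^ s * f x) := by
  have : Nontrivial (EuclideanSpace ℝ (Fin m)) :=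
    Module.nontrivial_of_finrank_pos (R := ℝ) (by rw [finrank_euclideanSpace_fin]; omega)
  have hdim : (finrank ℝ (EuclideanSpace ℝ (Fin m)) : ℝ) = m := by rw [finrank_euclideanSpace_fin]
  have hZ := InnerProductSpace.integral_exp_neg_mul_rpow_norm (E := EuclideanSpace ℝ (Fin m)) hs hτ
  rw [hdim] at hZ
  obtain rfl : f = gibbsDensity volume τ (‖·‖ ^ s) := by
    funext x
    rw [hf, gibbsDensity, hZ, rpow_neg hτ.le]
    field_simp
  rw [neg_integral_gibbsDensity_rpow_norm_mul_log _ hs hτ,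
    integral_rpow_norm_mul_gibbsDensity _ hs hτ, hZ, hdim,
    log_mul_rpow_neg_add_eq_mul_log (by positivity) hτ (div_pos (Nat.cast_pos.2 hm) hs).ne',
    inv_div]
  congr 2
  field_simp

theorem gg_max_entropy_equality (m : ℕ) (hm : 1 ≤ m) (s τ : ℝ) (hs : 0 < s) (hτ : 0 < τ)
    (f : EuclideanSpace ℝ (Fin m) → ℝ)
    (hf : ∀ x, f x = (Real.Gamma (m / 2 + 1) * τ ^ ((m : ℝ) / s) /
        (Real.Gamma (m / s + 1) * Real.pi ^ ((m : ℝ) / 2))) * Real.exp (-τ * ‖x‖ ^ s))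
    (hτ_eq : τ = m / (s * ∫ x, ‖x‖ ^ s * f x)) :
    (-∫ x, f x * Real.log (f x)) =
      (m / s) * Real.log
        (((Real.pi ^ ((m : ℝ) / 2) * Real.Gamma (m / s + 1) / Real.Gamma (m / 2 + 1)) ^ (s / (m : ℝ))
            * (s * Real.exp 1 / m)) *
          ∫ x, ‖x‖ ^ s * f x) :=
  gg_max_entropy_equality_general m hm s τ hs hτ f hf
end

section
/- For m ≥ 2, the function f(x) = c₂(m)·(‖x‖^m·log²(e/‖x‖))^{−1} on the open unit ball of ℝ^m (and 0 elsewhere), with c₂(m) = Γ(m/2)/(2π^{m/2}), is a probability density whose differential entropy is −∞. -/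
/-!
In polar coordinates `∫ f = m |B₁| c₂ ∫₀¹ dr / (r log² (e / r))`, and the substitution
`s = log (e / r) = 1 - log r` turns the radial integral into `∫₁^∞ ds / s² = 1`; the constant
`c₂` is the reciprocal of the area `m |B₁| = 2 π^{m/2} / Γ(m/2)` of the unit sphere.

Since `r ^ (m - 1) log² (e / r) → 0` as `r → 0`, near the origin `f ≥ e / ‖x‖`, i.e.
`log f ≥ log (e / ‖x‖)`, so `f log f ≥ c₂ / (‖x‖ ^ m log (e / ‖x‖))`, whose radial integral
becomes `∫ ds / s = ∞` after the same substitution. The negative part `-f log f ≤ 1 - f ≤ 1`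
lives on the unit ball and so has finite integral.
-/

open Real MeasureTheory Set Metric Filter Topology Module

section Substitution

variable {F : Type*} [NormedAddCommGroup F] [NormedSpace ℝ F] {δ : ℝ}

lemma image_one_sub_log_Ioo (hδ : 0 < δ) :
    (fun r => 1 - log r) '' Ioo 0 δ = Ioi (1 - log δ) := by
  ext s
  constructor
  · rintro ⟨r, ⟨hr₀, hrδ⟩, rfl⟩
    simpa using log_lt_log hr₀ hrδ
  · intro hs
    refine ⟨exp (1 - s), ⟨exp_pos _, ?_⟩, by simp⟩
    rw [← exp_log hδ, exp_lt_exp]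
    rw [mem_Ioi] at hs
    linarith

lemma hasDerivWithinAt_one_sub_log {r : ℝ} (hr : r ∈ Ioo 0 δ) :
    HasDerivWithinAt (fun r => 1 - log r) (-r⁻¹) (Ioo 0 δ) r := by
  simpa using ((hasDerivAt_log hr.1.ne').const_sub 1).hasDerivWithinAt

lemma injOn_one_sub_log : InjOn (fun r => 1 - log r) (Ioo 0 δ) := fun _ hr _ hs hrs =>
  log_injOn_pos hr.1 hs.1 (by simpa using hrs)

theorem integral_Ioo_inv_smul_comp_one_sub_log (hδ : 0 < δ) (g : ℝ → F) :
    ∫ r in Ioo 0 δ, r⁻¹ • g (1 - log r) = ∫ s in Ioi (1 - log δ), g s := by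
  rw [← image_one_sub_log_Ioo hδ, integral_image_eq_integral_abs_deriv_smul measurableSet_Ioo
    (fun r hr => hasDerivWithinAt_one_sub_log hr) injOn_one_sub_log]
  refine setIntegral_congr_fun measurableSet_Ioo fun r hr => ?_
  simp [abs_of_pos hr.1]

theorem integrableOn_Ioo_inv_smul_comp_one_sub_log_iff (hδ : 0 < δ) (g : ℝ → F) :
    IntegrableOn (fun r => r⁻¹ • g (1 - log r)) (Ioo 0 δ) ↔ IntegrableOn g (Ioi (1 - log δ)) := by
  rw [← image_one_sub_log_Ioo hδ, integrableOn_image_iff_integrableOn_abs_deriv_smul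
    measurableSet_Ioo (fun r hr => hasDerivWithinAt_one_sub_log hr) injOn_one_sub_log]
  refine integrableOn_congr_fun (fun r hr => ?_) measurableSet_Ioo
  simp [abs_of_pos hr.1]

end Substitution

theorem integral_Ioo_inv_mul_one_sub_log_sq :
    ∫ r in Ioo (0 : ℝ) 1, (r * (1 - log r) ^ 2)⁻¹ = 1 := calc
  _ = ∫ r in Ioo (0 : ℝ) 1, r⁻¹ • (1 - log r) ^ (-2 : ℝ) := by
    refine setIntegral_congr_fun measurableSet_Ioo fun r hr => ?_
    have : 0 < 1 - log r := by linarith [log_neg hr.1 hr.2]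
    simp [rpow_neg this.le, mul_comm]
  _ = ∫ s in Ioi 1, s ^ (-2 : ℝ) := by
    simpa using integral_Ioo_inv_smul_comp_one_sub_log one_pos fun s => s ^ (-2 : ℝ)
  _ = 1 := by
    rw [integral_Ioi_rpow_of_lt (by norm_num) one_pos]
    norm_num

theorem not_integrableOn_Ioo_inv_mul_one_sub_log {δ : ℝ} (hδ : 0 < δ) :
    ¬ IntegrableOn (fun r => (r * (1 - log r))⁻¹) (Ioo 0 δ) := by
  simpa [mul_inv, mul_comm] using
    (integrableOn_Ioo_inv_smul_comp_one_sub_log_iff hδ (·⁻¹)).not.2 not_integrableOn_Ioi_inv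

theorem tendsto_mul_one_sub_log_sq_nhdsGT_zero :
    Tendsto (fun r => r * (1 - log r) ^ 2) (𝓝[>] 0) (𝓝 0) := by
  have hsqrt : Tendsto (√·) (𝓝[>] 0) (𝓝 0) := by
    simpa using continuous_sqrt.tendsto 0 |>.mono_left nhdsWithin_le_nhds
  have hlog : Tendsto (fun r => log r * √r) (𝓝[>] 0) (𝓝 0) := by
    simpa only [sqrt_eq_rpow] using tendsto_log_mul_rpow_nhdsGT_zero one_half_pos
  refine ((hsqrt.sub hlog).pow 2).congr' ?_ |>.trans (by simp)
  filter_upwards [self_mem_nhdsWithin] with r (hr : 0 < r)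
  rw [← one_sub_mul, mul_pow, sq_sqrt hr.le, mul_comm]

noncomputable def logSqProfile (n : ℕ) (c r : ℝ) : ℝ :=
  if r < 1 then c * (r ^ n * (1 - log r) ^ 2)⁻¹ else 0

section LogSqProfile

variable {n : ℕ} {c r : ℝ}

lemma logSqProfile_nonneg (hc : 0 ≤ c) (hr : 0 ≤ r) : 0 ≤ logSqProfile n c r := by
  unfold logSqProfile
  split_ifs <;> positivity

lemma logSqProfile_of_one_le (hr : 1 ≤ r) : logSqProfile n c r = 0 :=
  if_neg hr.not_gt

theorem integral_Ioi_pow_mul_logSqProfile (hn : n ≠ 0) (c : ℝ) :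
    ∫ r in Ioi 0, r ^ (n - 1) * logSqProfile n c r = c := calc
  _ = ∫ r in Ioi 0, (Iio 1).indicator (fun r => c * (r * (1 - log r) ^ 2)⁻¹) r := by
    refine setIntegral_congr_fun measurableSet_Ioi fun r (hr : 0 < r) => ?_
    unfold logSqProfile
    split_ifs with h
    · rw [indicator_of_mem (show r ∈ Iio 1 from h), ← pow_sub_one_mul hn]
      field_simp
    · simp [h]
  _ = c := by
    rw [integral_indicator measurableSet_Iio, Measure.restrict_restrict measurableSet_Iio,
      Iio_inter_Ioi, integral_const_mul, integral_Ioo_inv_mul_one_sub_log_sq, mul_one]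

lemma one_sub_log_le_log_logSqProfile (hn : 2 ≤ n) (hr₀ : 0 < r) (hr₁ : r < 1)
    (hsmall : exp 1 * (r * (1 - log r) ^ 2) ≤ c) : 1 - log r ≤ log (logSqProfile n c r) := by
  obtain ⟨k, rfl⟩ : ∃ k, n = k + 2 := ⟨n - 2, by omega⟩
  have ht : 0 < 1 - log r := by linarith [log_neg hr₀ hr₁]
  have hc : 0 < c := lt_of_lt_of_le (by positivity) hsmall
  rw [logSqProfile, if_pos hr₁, le_log_iff_exp_le (by positivity), exp_sub, exp_log hr₀,
    ← div_eq_mul_inv, div_le_div_iff₀ hr₀ (by positivity)]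
  have hpow : r ^ (k + 2) ≤ r ^ 2 := pow_le_pow_of_le_one hr₀.le hr₁.le (by omega)
  calc exp 1 * (r ^ (k + 2) * (1 - log r) ^ 2) ≤ exp 1 * (r ^ 2 * (1 - log r) ^ 2) := by gcongr
    _ = exp 1 * (r * (1 - log r) ^ 2) * r := by ring
    _ ≤ c * r := by gcongr

theorem eventually_le_logSqProfile_mul_log (hn : 2 ≤ n) (hc : 0 < c) :
    ∀ᶠ r in 𝓝[>] 0,
      c * (r ^ n * (1 - log r))⁻¹ ≤ logSqProfile n c r * log (logSqProfile n c r) := by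
  have hsmall : ∀ᶠ r in 𝓝[>] 0, r * (1 - log r) ^ 2 < c / exp 1 :=
    tendsto_mul_one_sub_log_sq_nhdsGT_zero.eventually (gt_mem_nhds (by positivity))
  filter_upwards [Ioo_mem_nhdsGT one_pos, hsmall] with r ⟨hr₀, hr₁⟩ hr
  have hlog := one_sub_log_le_log_logSqProfile (c := c) hn hr₀ hr₁
    (by rw [lt_div_iff₀' (exp_pos 1)] at hr; exact hr.le)
  calc c * (r ^ n * (1 - log r))⁻¹ = logSqProfile n c r * (1 - log r) := by
        rw [logSqProfile, if_pos hr₁]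
        field_simp
    _ ≤ _ := mul_le_mul_of_nonneg_left hlog (logSqProfile_nonneg hc.le hr₀.le)

end LogSqProfile

theorem lintegral_ofReal_negMulLog_le_measure {α : Type*} [MeasurableSpace α] {μ : Measure α}
    {u : α → ℝ} {s : Set α} (hs : MeasurableSet s) (hu : ∀ x ∈ s, 0 ≤ u x)
    (hsupp : ∀ x ∉ s, u x = 0) :
    ∫⁻ x, ENNReal.ofReal (negMulLog (u x)) ∂μ ≤ μ s := calc
  _ ≤ ∫⁻ x, s.indicator 1 x ∂μ := lintegral_mono fun x => by
    by_cases hx : x ∈ s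
    · simp only [indicator_of_mem hx, Pi.one_apply, ENNReal.ofReal_le_one]
      linarith [negMulLog_le_one_sub_self (hu x hx), hu x hx]
    · simp [hx, hsupp x hx]
  _ = μ s := lintegral_indicator_one hs

section Polar

variable {E : Type*} [NormedAddCommGroup E] [NormedSpace ℝ E] [MeasurableSpace E] [BorelSpace E]
  [FiniteDimensional ℝ E] [Nontrivial E] (μ : Measure E) [μ.IsAddHaarMeasure]

theorem integral_logSqProfile_norm (c : ℝ) :
    ∫ x, logSqProfile (finrank ℝ E) c ‖x‖ ∂μ = finrank ℝ E * μ.real (ball 0 1) * c := by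
  rw [integral_fun_norm_addHaar]
  simp only [smul_eq_mul, nsmul_eq_mul]
  rw [integral_Ioi_pow_mul_logSqProfile finrank_pos.ne' c, mul_assoc]

theorem not_integrableOn_ball_inv_norm_pow_mul_one_sub_log {δ c : ℝ} (hδ : 0 < δ) (hc : c ≠ 0) :
    ¬ IntegrableOn (fun x : E => c * (‖x‖ ^ finrank ℝ E * (1 - log ‖x‖))⁻¹) (ball 0 δ) μ := by
  rw [integrableOn_fun_norm_addHaar μ (f := fun r => c * (r ^ finrank ℝ E * (1 - log r))⁻¹),
    integrableOn_congr_fun (g := fun r => c * (r * (1 - log r))⁻¹) (fun r hr => ?_)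
      measurableSet_Ioo]
  · exact fun h => not_integrableOn_Ioo_inv_mul_one_sub_log hδ
      ((integrable_const_mul_iff (isUnit_iff_ne_zero.2 hc) _).1 h)
  · have : r ^ (finrank ℝ E - 1) ≠ 0 := pow_ne_zero _ hr.1.ne'
    simp only [smul_eq_mul]
    rw [← pow_sub_one_mul finrank_pos.ne' r]
    field_simp

theorem lintegral_ofReal_mul_log_logSqProfile_norm_eq_top (hn : 2 ≤ finrank ℝ E) {c : ℝ}
    (hc : 0 < c) :
    ∫⁻ x, ENNReal.ofReal (logSqProfile (finrank ℝ E) c ‖x‖ *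
      log (logSqProfile (finrank ℝ E) c ‖x‖)) ∂μ = ⊤ := by
  set n := finrank ℝ E
  obtain ⟨δ, hδ, hle⟩ := (nhdsGT_basis 0).eventually_iff.1
    ((eventually_le_logSqProfile_mul_log hn hc).and (Ioo_mem_nhdsGT one_pos))
  have hlow : ∀ x ∈ ball (0 : E) δ, 0 ≤ c * (‖x‖ ^ n * (1 - log ‖x‖))⁻¹ ∧
      c * (‖x‖ ^ n * (1 - log ‖x‖))⁻¹ ≤ logSqProfile n c ‖x‖ * log (logSqProfile n c ‖x‖) := by
    intro x hx
    rcases (norm_nonneg x).eq_or_lt with h0 | hpos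
    · simp [← h0, logSqProfile, zero_pow (by omega : n ≠ 0)]
    · obtain ⟨hbound, hr₀, hr₁⟩ := hle ⟨hpos, mem_ball_zero_iff.1 hx⟩
      have : 0 < 1 - log ‖x‖ := by linarith [log_neg hr₀ hr₁]
      exact ⟨by positivity, hbound⟩
  refine top_unique ?_
  calc ⊤ = ∫⁻ x in ball 0 δ, ENNReal.ofReal (c * (‖x‖ ^ n * (1 - log ‖x‖))⁻¹) ∂μ := by
        refine (not_ne_iff.1 fun h => not_integrableOn_ball_inv_norm_pow_mul_one_sub_log μ hδ
          hc.ne' ((lintegral_ofReal_ne_top_iff_integrable (by fun_prop) ?_).1 h)).symm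
        exact (ae_restrict_iff' measurableSet_ball).2 (.of_forall fun x hx => (hlow x hx).1)
    _ ≤ ∫⁻ x in ball 0 δ, ENNReal.ofReal (logSqProfile n c ‖x‖ * log (logSqProfile n c ‖x‖)) ∂μ :=
        setLIntegral_mono' measurableSet_ball fun x hx => ENNReal.ofReal_le_ofReal (hlow x hx).2
    _ ≤ _ := setLIntegral_le_lintegral _ _

end Polar

theorem finrank_mul_volumeReal_ball_zero_one {E : Type*} [NormedAddCommGroup E]
    [InnerProductSpace ℝ E] [FiniteDimensional ℝ E] [MeasurableSpace E] [BorelSpace E]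
    [Nontrivial E] :
    finrank ℝ E * volume.real (ball (0 : E) 1) =
      2 * π ^ ((finrank ℝ E : ℝ) / 2) / Gamma (finrank ℝ E / 2) := by
  have hn : (0 : ℝ) < finrank ℝ E := by exact_mod_cast finrank_pos
  have hΓ : 0 < Gamma (finrank ℝ E / 2) := Gamma_pos_of_pos (by positivity)
  have hsqrt : √π ^ finrank ℝ E = π ^ ((finrank ℝ E : ℝ) / 2) := by
    rw [sqrt_eq_rpow, ← rpow_natCast, ← rpow_mul pi_pos.le]
    ring_nf
  rw [Measure.real, InnerProductSpace.volume_ball, ENNReal.ofReal_one, one_pow, one_mul,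
    ENNReal.toReal_ofReal (by positivity), Gamma_add_one (by positivity), hsqrt]
  field_simp

theorem density_infinite_entropy_multivariate (m : ℕ) (hm : 2 ≤ m)
    (c₂ : ℝ) (hc₂ : c₂ = Real.Gamma (m / 2) / (2 * Real.pi ^ ((m : ℝ) / 2)))
    (f : EuclideanSpace ℝ (Fin m) → ℝ)
    (hf : ∀ x, f x = if ‖x‖ < 1 then c₂ * (‖x‖ ^ m * (1 - Real.log ‖x‖) ^ 2)⁻¹ else 0) :
    (∫ x, f x = 1) ∧
    (∫⁻ x, ENNReal.ofReal (f x * Real.log (f x)) = ⊤) ∧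
    (∫⁻ x, ENNReal.ofReal (-(f x * Real.log (f x))) < ⊤) := by
  obtain rfl : f = fun x => logSqProfile m c₂ ‖x‖ := funext hf
  have : Nonempty (Fin m) := ⟨⟨0, by omega⟩⟩
  have hdim : finrank ℝ (EuclideanSpace ℝ (Fin m)) = m := finrank_euclideanSpace_fin
  have hc₂_pos : 0 < c₂ := by
    have := Gamma_pos_of_pos (show (0 : ℝ) < m / 2 by positivity)
    rw [hc₂]
    positivity
  refine ⟨?_, ?_, ?_⟩
  · have hint := integral_logSqProfile_norm (volume : Measure (EuclideanSpace ℝ (Fin m))) c₂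
    have harea := finrank_mul_volumeReal_ball_zero_one (E := EuclideanSpace ℝ (Fin m))
    rw [hdim] at hint harea
    rw [hint, harea, hc₂]
    field_simp
  · simpa only [hdim] using lintegral_ofReal_mul_log_logSqProfile_norm_eq_top
      (volume : Measure (EuclideanSpace ℝ (Fin m))) (hm.trans hdim.ge) hc₂_pos
  · have hneg := lintegral_ofReal_negMulLog_le_measure (μ := volume) (s := ball 0 1)
      (u := fun x : EuclideanSpace ℝ (Fin m) => logSqProfile m c₂ ‖x‖) measurableSet_ball
      (fun x _ => logSqProfile_nonneg hc₂_pos.le (norm_nonneg x))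
      (fun x hx => logSqProfile_of_one_le (by simpa using hx))
    simp only [negMulLog, neg_mul] at hneg
    exact hneg.trans_lt measure_ball_lt_top
end

section
/- Stochastic representation of the generalized Gaussian: if U is uniformly distributed on the unit sphere S^{m−1}, V ∼ Gamma(m/s, scale 2) independent of U, and R = V^{1/s}, then X = U·R has density f(x;m,s) = (Γ(m/2+1)/(Γ(m/s+1)π^{m/2}2^{m/s}))·exp(−‖x‖^s/2) on ℝ^m. -/
open Real MeasureTheory ProbabilityTheory Set Metric Module
open scoped ENNReal

/-!
Write `X = R • U` with `R = V ^ (1 / s)`. The substitution `v = r ^ s` shows that `R` has density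
`∝ r ^ (m - 1) * exp (-r ^ s / 2)` on `(0, ∞)`. In polar coordinates, Lebesgue measure on `ℝ^m`
is the product of the surface measure of the sphere and `r ^ (m - 1) dr`, so scaling an independent
uniform direction by such a radius yields the radial density `∝ exp (-‖x‖ ^ s / 2)`. The constant
comes from the sphere area `m π ^ (m / 2) / Γ(m / 2 + 1)` and `Γ(m / s + 1) = (m / s) Γ(m / s)`.
-/

theorem lintegral_comp_rpow_Ioi {p : ℝ} (hp : 0 < p) (g : ℝ → ℝ≥0∞) :
    ∫⁻ x in Ioi 0, ENNReal.ofReal (p * x ^ (p - 1)) * g (x ^ p) = ∫⁻ y in Ioi 0, g y := by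
  have himage : (· ^ p) '' Ioi (0 : ℝ) = Ioi 0 := by
    refine Subset.antisymm (image_subset_iff.2 fun x hx => rpow_pos_of_pos hx p) fun y hy => ?_
    exact ⟨y ^ p⁻¹, rpow_pos_of_pos hy _, rpow_inv_rpow (le_of_lt hy) hp.ne'⟩
  conv_rhs => rw [← himage]
  rw [lintegral_image_eq_lintegral_abs_deriv_mul measurableSet_Ioi
    (fun x hx => (hasDerivAt_rpow_const (Or.inl (ne_of_gt hx))).hasDerivWithinAt)
    ((rpow_left_injOn hp.ne').mono Ioi_subset_Ici_self) g]
  refine setLIntegral_congr_fun measurableSet_Ioi fun x (hx : 0 < x) => ?_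
  rw [abs_of_pos (by positivity)]

theorem ofReal_mul_gammaPDF_rpow {a p β r : ℝ} (hp : 0 < p) (hr : 0 < r) :
    ENNReal.ofReal (p * r ^ (p - 1)) * gammaPDF (a / p) β (r ^ p) =
      ENNReal.ofReal (p * β ^ (a / p) / Gamma (a / p) * r ^ (a - 1) * exp (-(β * r ^ p))) := by
  have hpow : r ^ (p - 1) * (r ^ p) ^ (a / p - 1) = r ^ (a - 1) := by
    rw [← rpow_mul hr.le, ← rpow_add hr]
    congr 1
    field_simp
    ring
  rw [gammaPDF_of_nonneg (by positivity), ← ENNReal.ofReal_mul (by positivity), ← hpow]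
  ring_nf

theorem map_rpow_inv_gammaMeasure {a p β : ℝ} (hp : 0 < p) :
    (gammaMeasure (a / p) β).map (· ^ (1 / p)) =
      (volume.restrict (Ioi 0)).withDensity fun r =>
        ENNReal.ofReal (p * β ^ (a / p) / Gamma (a / p) * r ^ (a - 1) * exp (-(β * r ^ p))) := by
  refine Measure.ext_of_lintegral _ fun g hg => ?_
  have hpdf : Measurable (gammaPDF (a / p) β) := (measurable_gammaPDFReal _ _).ennreal_ofReal
  have hsupp : (fun v => gammaPDF (a / p) β v * g (v ^ (1 / p))).support ⊆ Ici 0 := by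
    intro v hv
    by_contra hneg
    exact hv (by simp [gammaPDF_of_neg (not_le.1 hneg)])
  rw [lintegral_map hg (by fun_prop), gammaMeasure,
    lintegral_withDensity_eq_lintegral_mul _ hpdf (by fun_prop),
    lintegral_withDensity_eq_lintegral_mul _ (by fun_prop) hg]
  simp only [Pi.mul_apply]
  rw [← setLIntegral_eq_of_support_subset hsupp, ← setLIntegral_congr Ioi_ae_eq_Ici,
    ← lintegral_comp_rpow_Ioi hp]
  refine setLIntegral_congr_fun measurableSet_Ioi fun r (hr : 0 < r) => ?_
  rw [← mul_assoc, ofReal_mul_gammaPDF_rpow hp hr, ← rpow_mul hr.le, mul_one_div_cancel hp.ne',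
    rpow_one]

section Polar

variable {E : Type*} [NormedAddCommGroup E] [NormedSpace ℝ E] [FiniteDimensional ℝ E]
  [MeasurableSpace E] [BorelSpace E] [Nontrivial E] (μ : Measure E) [μ.IsAddHaarMeasure]

theorem lintegral_eq_lintegral_toSphere_Ioi {g : E → ℝ≥0∞} (hg : Measurable g) :
    ∫⁻ x, g x ∂μ = ∫⁻ u, (∫⁻ r in Ioi (0 : ℝ),
      ENNReal.ofReal (r ^ (finrank ℝ E - 1)) * g (r • (u : E))) ∂μ.toSphere := by
  have hpolar : Measurable fun p : sphere (0 : E) 1 × Ioi (0 : ℝ) => g ((p.2 : ℝ) • (p.1 : E)) :=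
    hg.comp ((measurable_subtype_coe.comp measurable_snd).smul
      (measurable_subtype_coe.comp measurable_fst))
  have hcoords : ∀ x : ({0}ᶜ : Set E),
      g (((homeomorphUnitSphereProd E x).2 : ℝ) • ((homeomorphUnitSphereProd E x).1 : E)) = g x :=
    fun x => congrArg g (by simp [smul_inv_smul₀ (norm_ne_zero_iff.2 x.2)])
  calc ∫⁻ x, g x ∂μ = ∫⁻ x : ({0}ᶜ : Set E), g x ∂μ.comap (↑) := by
        rw [lintegral_subtype_comap (measurableSet_singleton 0).compl, restrict_compl_singleton]
    _ = ∫⁻ p, g ((p.2 : ℝ) • (p.1 : E)) ∂μ.toSphere.prod (.volumeIoiPow (finrank ℝ E - 1)) := by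
        rw [← (μ.measurePreserving_homeomorphUnitSphereProd).lintegral_comp hpolar,
          lintegral_congr hcoords]
    _ = _ := by
        rw [lintegral_prod _ hpolar.aemeasurable]
        refine lintegral_congr fun u => ?_
        rw [Measure.volumeIoiPow, lintegral_withDensity_eq_lintegral_mul _ (by fun_prop)
          (by fun_prop)]
        exact lintegral_subtype_comap measurableSet_Ioi
          fun r => ENNReal.ofReal (r ^ (finrank ℝ E - 1)) * g (r • (u : E))

theorem map_smul_eq_withDensity_of_indepFun {Ω : Type*} [MeasurableSpace Ω] {P : Measure Ω}
    [IsFiniteMeasure P] {U : Ω → sphere (0 : E) 1} {R : Ω → ℝ} {φ : ℝ → ℝ≥0∞}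
    (hU : Measurable U) (hR : Measurable R) (hφ : Measurable φ)
    (hU_law : P.map U = (μ.toSphere univ)⁻¹ • μ.toSphere)
    (hR_law : P.map R = (volume.restrict (Ioi 0)).withDensity fun r =>
      ENNReal.ofReal (r ^ (finrank ℝ E - 1)) * φ r)
    (hUR : IndepFun U R P) :
    P.map (fun ω => R ω • (U ω : E)) = μ.withDensity fun x => (μ.toSphere univ)⁻¹ * φ ‖x‖ := by
  refine Measure.ext_of_lintegral _ fun g hg => ?_
  set c := (μ.toSphere univ)⁻¹
  have hsmul : Measurable fun p : sphere (0 : E) 1 × ℝ => g (p.2 • (p.1 : E)) := by fun_prop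
  calc ∫⁻ x, g x ∂P.map (fun ω => R ω • (U ω : E))
      = ∫⁻ p, g (p.2 • (p.1 : E)) ∂P.map (fun ω => (U ω, R ω)) := by
        rw [lintegral_map hg (by fun_prop), lintegral_map hsmul (hU.prodMk hR)]
    _ = c * ∫⁻ u, (∫⁻ r in Ioi (0 : ℝ),
          ENNReal.ofReal (r ^ (finrank ℝ E - 1)) * φ r * g (r • (u : E))) ∂μ.toSphere := by
        rw [hUR.map_prod_eq_prod_map_map hU.aemeasurable hR.aemeasurable, hU_law, hR_law,
          lintegral_prod _ hsmul.aemeasurable, lintegral_smul_measure]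
        congr 1
        refine lintegral_congr fun u => ?_
        exact lintegral_withDensity_eq_lintegral_mul _ (by fun_prop) (by fun_prop)
    _ = ∫⁻ u, (∫⁻ r in Ioi (0 : ℝ),
          ENNReal.ofReal (r ^ (finrank ℝ E - 1)) * (c * φ ‖r • (u : E)‖ * g (r • (u : E))))
          ∂μ.toSphere := by
        rw [← lintegral_const_mul _ (by fun_prop)]
        refine lintegral_congr fun u => ?_
        rw [← lintegral_const_mul _ (by fun_prop)]
        refine setLIntegral_congr_fun measurableSet_Ioi fun r (hr : 0 < r) => ?_
        rw [norm_smul, mem_sphere_zero_iff_norm.1 u.2, mul_one, norm_of_nonneg hr.le]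
        ring
    _ = ∫⁻ x, g x ∂μ.withDensity fun x => c * φ ‖x‖ := by
        rw [lintegral_withDensity_eq_lintegral_mul _ (by fun_prop) hg,
          lintegral_eq_lintegral_toSphere_Ioi μ (by fun_prop)]
        rfl

end Polar

theorem toSphere_volume_univ {E : Type*} [NormedAddCommGroup E] [InnerProductSpace ℝ E]
    [FiniteDimensional ℝ E] [MeasurableSpace E] [BorelSpace E] [Nontrivial E] :
    (volume : Measure E).toSphere univ =
      ENNReal.ofReal (finrank ℝ E * π ^ ((finrank ℝ E : ℝ) / 2) / Gamma (finrank ℝ E / 2 + 1)) := by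
  rw [Measure.toSphere_apply_univ, InnerProductSpace.volume_ball, ENNReal.ofReal_one, one_pow,
    one_mul, ← ENNReal.ofReal_natCast, ← ENNReal.ofReal_mul (by positivity), sqrt_eq_rpow,
    ← rpow_natCast, ← rpow_mul pi_pos.le, mul_div_assoc]
  ring_nf

theorem gg_stochastic_representation (m : ℕ) (hm : 1 ≤ m) (s : ℝ) (hs : 0 < s)
    {Ω : Type*} [MeasurableSpace Ω] (P : Measure Ω) [IsProbabilityMeasure P]
    (U : Ω → Metric.sphere (0 : EuclideanSpace ℝ (Fin m)) 1) (V : Ω → ℝ)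
    (hU_meas : Measurable U) (hV_meas : Measurable V)
    (hU_unif : Measure.map U P =
      ((volume : Measure (EuclideanSpace ℝ (Fin m))).toSphere Set.univ)⁻¹ •
        (volume : Measure (EuclideanSpace ℝ (Fin m))).toSphere)
    (hV_gamma : Measure.map V P =
      volume.withDensity (ProbabilityTheory.gammaPDF ((m : ℝ) / s) (1 / 2)))
    (hUV_indep : IndepFun U V P)
    (X : Ω → EuclideanSpace ℝ (Fin m))
    (hX : ∀ ω, X ω = (V ω) ^ (1 / s) • (U ω : EuclideanSpace ℝ (Fin m))) :
    Measure.map X P = volume.withDensity (fun x =>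
      ENNReal.ofReal
        ((Real.Gamma (m / 2 + 1) /
            (Real.Gamma (m / s + 1) * Real.pi ^ ((m : ℝ) / 2) * 2 ^ ((m : ℝ) / s))) *
          Real.exp (-‖x‖ ^ s / 2))) := by
  have hm' : (0 : ℝ) < m := by exact_mod_cast hm
  have : Nontrivial (EuclideanSpace ℝ (Fin m)) :=
    Module.nontrivial_of_finrank_pos (R := ℝ) (by rw [finrank_euclideanSpace_fin]; omega)
  have hR_law : P.map (fun ω => V ω ^ (1 / s)) = (volume.restrict (Ioi 0)).withDensity fun r =>
      ENNReal.ofReal (r ^ (finrank ℝ (EuclideanSpace ℝ (Fin m)) - 1)) *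
        ENNReal.ofReal (s * (1 / 2) ^ ((m : ℝ) / s) / Gamma (m / s) * exp (-(1 / 2 * r ^ s))) := by
    change P.map ((· ^ (1 / s)) ∘ V) = _
    rw [← Measure.map_map (by fun_prop) hV_meas, hV_gamma, ← gammaMeasure,
      map_rpow_inv_gammaMeasure hs]
    refine withDensity_congr_ae ((ae_restrict_mem measurableSet_Ioi).mono fun r (hr : 0 < r) => ?_)
    dsimp only
    rw [finrank_euclideanSpace_fin, ← ENNReal.ofReal_mul (by positivity), ← rpow_natCast,
      Nat.cast_pred hm]
    ring_nf
  rw [funext hX, map_smul_eq_withDensity_of_indepFun volume hU_meas (by fun_prop) (by fun_prop)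
    hU_unif hR_law (hUV_indep.comp measurable_id (measurable_id.pow_const (1 / s))),
    toSphere_volume_univ, finrank_euclideanSpace_fin]
  refine congrArg _ (funext fun x => ?_)
  rw [← ENNReal.ofReal_inv_of_pos (by positivity), ← ENNReal.ofReal_mul (by positivity),
    Gamma_add_one (div_pos hm' hs).ne', div_rpow one_pos.le zero_le_two, one_rpow]
  have hΓ_half := Gamma_pos_of_pos (by positivity : 0 < (m : ℝ) / 2 + 1)
  have hΓ_s := Gamma_pos_of_pos (by positivity : 0 < (m : ℝ) / s)
  congr 1
  field_simp
end
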